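/- Suppose the measurement operator satisfies (2r, δ)-RIP, X* = U*·U*ᵀ for some U* ∈ ℝ^{n×r}, n ≥ 2, σ_w ≥ 0, and the noise vector w ∈ ℝ^m satisfies: |Σ_{i=1}^m w_i·⟨A_i, M⟩| ≤ 2·σ_w·√(log n)·(Σ_{i=1}^m ⟨A_i, M⟩²)^{1/2} for every M ∈ ℝ^{n×n} with rank(M) ≤ 2r. Let U ∈ ℝ^{n×r} satisfy the noisy first-order stationarity equation Σ_{i=1}^m (⟨A_i, U·Uᵀ − X*⟩ − w_i)·A_i·U = 0, and let P be the orthogonal projection onto the column space of U. Then ‖(U·Uᵀ − X*)·P‖_F ≤ δ·‖U·Uᵀ − X*‖_F + 2·√((1+δ)·log(n)/m)·σ_w. -/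

import Mathlib

open Matrix MeasureTheory BigOperators

/-- Matrix inner product `⟨A, X⟩ = trace(Aᵀ X)`. -/
noncomputable def mip {n : ℕ} (A X : Matrix (Fin n) (Fin n) ℝ) : ℝ :=
  (Aᵀ * X).trace

/-- Frobenius norm of a real matrix. -/
noncomputable def frob {n₁ n₂ : ℕ} (M : Matrix (Fin n₁) (Fin n₂) ℝ) : ℝ :=
  Real.sqrt (∑ i, ∑ j, (M i j) ^ 2)

/-- `(k, δ)`-restricted isometry property of the measurement operator `A`. -/
def RIP {n m : ℕ} (A : Fin m → Matrix (Fin n) (Fin n) ℝ) (k : ℕ) (δ : ℝ) : Prop :=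
  ∀ X : Matrix (Fin n) (Fin n) ℝ, X.rank ≤ k →
    (1 - δ) * frob X ^ 2 ≤ (1 / (m : ℝ)) * ∑ i, mip (A i) X ^ 2 ∧
    (1 / (m : ℝ)) * ∑ i, mip (A i) X ^ 2 ≤ (1 + δ) * frob X ^ 2

/-- Objective `f(U) = ∑ i, (⟨A i, U Uᵀ⟩ - y i)²`. -/
noncomputable def fobj {n m r : ℕ} (A : Fin m → Matrix (Fin n) (Fin n) ℝ) (y : Fin m → ℝ)
    (U : Matrix (Fin n) (Fin r) ℝ) : ℝ :=
  ∑ i, (mip (A i) (U * Uᵀ) - y i) ^ 2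

/-! Write `E = U Uᵀ - X⋆`. Since `P` projects onto the column space of `U`, `E P = V Uᵀ` for
some `V`, so pairing the stationarity equation with `V` gives
`∑ i, (⟨A i, E⟩ - w i) ⟨A i, E P⟩ = 0`. Polarizing the RIP on the pencil spanned by `E` and
`E P` (all of rank `≤ 2r`) bounds `(1/m) ∑ i, ⟨A i, E⟩ ⟨A i, E P⟩` below by
`⟨E, E P⟩ - δ ‖E‖ ‖E P‖ = ‖E P‖² - δ ‖E‖ ‖E P‖`, while the noise bound and the upper RIP
inequality bound `(1/m) ∑ i, w i ⟨A i, E P⟩` above by `2 √((1 + δ) log n / m) σ_w ‖E P‖`.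
Dividing by `‖E P‖` gives the claim. -/

theorem Matrix.rank_sub_le {K l m : Type*} [Field K] [Fintype m] (A B : Matrix l m K) :
    (A - B).rank ≤ A.rank + B.rank := by
  have hrange : LinearMap.range (A - B).mulVecLin ≤
      LinearMap.range A.mulVecLin ⊔ LinearMap.range B.mulVecLin := by
    rintro _ ⟨v, rfl⟩
    rw [mulVecLin_apply, sub_mulVec]
    exact Submodule.sub_mem_sup ⟨v, rfl⟩ ⟨v, rfl⟩
  exact (Submodule.finrank_mono hrange).trans (Submodule.finrank_add_le_finrank_add_finrank _ _)

theorem Matrix.exists_mul_eq_of_range_mulVecLin_le {R l m k : Type*} [CommRing R] [Fintype m]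
    [Fintype k] [DecidableEq k] {U : Matrix l m R} {B : Matrix l k R}
    (h : LinearMap.range B.mulVecLin ≤ LinearMap.range U.mulVecLin) :
    ∃ C : Matrix m k R, U * C = B := by
  have hcol : ∀ j, ∃ c : m → R, U *ᵥ c = Bᵀ j := fun j =>
    h ⟨Pi.single j 1, by rw [mulVecLin_apply, mulVec_single_one]; rfl⟩
  choose c hc using hcol
  refine ⟨(of c)ᵀ, ?_⟩
  ext i j
  simpa [mul_apply, mulVec, dotProduct] using congrFun (hc j) i

section FrobeniusInner

variable {n : ℕ}

lemma mip_comm (A X : Matrix (Fin n) (Fin n) ℝ) : mip A X = mip X A := by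
  rw [mip, ← trace_transpose, transpose_mul, transpose_transpose, mip]

lemma mip_add_right (A X Y : Matrix (Fin n) (Fin n) ℝ) : mip A (X + Y) = mip A X + mip A Y := by
  simp [mip, Matrix.mul_add]

lemma mip_sub_right (A X Y : Matrix (Fin n) (Fin n) ℝ) : mip A (X - Y) = mip A X - mip A Y := by
  simp [mip, Matrix.mul_sub]

lemma mip_add_left (A B X : Matrix (Fin n) (Fin n) ℝ) : mip (A + B) X = mip A X + mip B X := by
  simp [mip, Matrix.add_mul]

lemma mip_sub_left (A B X : Matrix (Fin n) (Fin n) ℝ) : mip (A - B) X = mip A X - mip B X := by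
  simp [mip, Matrix.sub_mul]

lemma mip_smul_right (A X : Matrix (Fin n) (Fin n) ℝ) (c : ℝ) : mip A (c • X) = c * mip A X := by
  simp [mip]

lemma mip_smul_left (A X : Matrix (Fin n) (Fin n) ℝ) (c : ℝ) : mip (c • A) X = c * mip A X := by
  simp [mip]

lemma mip_self (X : Matrix (Fin n) (Fin n) ℝ) : mip X X = frob X ^ 2 := by
  rw [frob, Real.sq_sqrt (by positivity), Finset.sum_comm]
  simp [mip, trace, mul_apply, sq]

lemma frob_nonneg {n₁ n₂ : ℕ} (M : Matrix (Fin n₁) (Fin n₂) ℝ) : 0 ≤ frob M :=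
  Real.sqrt_nonneg _

lemma frob_eq_zero_iff {n₁ n₂ : ℕ} {M : Matrix (Fin n₁) (Fin n₂) ℝ} : frob M = 0 ↔ M = 0 := by
  rw [frob, Real.sqrt_eq_zero (by positivity)]
  refine ⟨fun h => ?_, fun h => by simp [h]⟩
  ext i j
  have hrow := (Finset.sum_eq_zero_iff_of_nonneg fun _ _ => by positivity).1 h i (Finset.mem_univ _)
  simpa using (Finset.sum_eq_zero_iff_of_nonneg fun _ _ => by positivity).1 hrow j
    (Finset.mem_univ _)

lemma frob_smul_sq (c : ℝ) (X : Matrix (Fin n) (Fin n) ℝ) :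
    frob (c • X) ^ 2 = c ^ 2 * frob X ^ 2 := by
  rw [← mip_self, ← mip_self, mip_smul_right, mip_comm, mip_smul_right]
  ring

lemma frob_add_sq_sub_frob_sub_sq (X Y : Matrix (Fin n) (Fin n) ℝ) :
    frob (X + Y) ^ 2 - frob (X - Y) ^ 2 = 4 * mip X Y := by
  simp only [← mip_self, mip_add_left, mip_sub_left, mip_add_right, mip_sub_right, mip_comm Y X]
  ring

lemma frob_add_sq_add_frob_sub_sq (X Y : Matrix (Fin n) (Fin n) ℝ) :
    frob (X + Y) ^ 2 + frob (X - Y) ^ 2 = 2 * (frob X ^ 2 + frob Y ^ 2) := by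
  simp only [← mip_self, mip_add_left, mip_sub_left, mip_add_right, mip_sub_right, mip_comm Y X]
  ring

lemma mip_mul_of_transpose_eq {P : Matrix (Fin n) (Fin n) ℝ} (hP : Pᵀ = P)
    (X Y : Matrix (Fin n) (Fin n) ℝ) : mip X (Y * P) = mip (X * P) Y := by
  rw [mip, mip, transpose_mul, hP, ← Matrix.mul_assoc, trace_mul_comm, Matrix.mul_assoc]

lemma mip_mul_orthogonalProjection {P : Matrix (Fin n) (Fin n) ℝ} (hPsym : Pᵀ = P)
    (hPidem : P * P = P) (X : Matrix (Fin n) (Fin n) ℝ) : mip X (X * P) = frob (X * P) ^ 2 := by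
  rw [← mip_self, ← mip_mul_of_transpose_eq hPsym, Matrix.mul_assoc, hPidem]

lemma sum_mip_sq_add_sub_sum_mip_sq_sub {m : ℕ} (A : Fin m → Matrix (Fin n) (Fin n) ℝ)
    (X Y : Matrix (Fin n) (Fin n) ℝ) :
    ∑ i, mip (A i) (X + Y) ^ 2 - ∑ i, mip (A i) (X - Y) ^ 2
      = 4 * ∑ i, mip (A i) X * mip (A i) Y := by
  rw [← Finset.sum_sub_distrib, Finset.mul_sum]
  refine Finset.sum_congr rfl fun i _ => ?_
  rw [mip_add_right, mip_sub_right]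
  ring

end FrobeniusInner

namespace RIP

variable {n m k : ℕ} {A : Fin m → Matrix (Fin n) (Fin n) ℝ} {δ : ℝ}

lemma mul_frob_nonneg (h : RIP A k δ) {X : Matrix (Fin n) (Fin n) ℝ} (hX : X.rank ≤ k) :
    0 ≤ δ * frob X := by
  obtain ⟨hlower, hupper⟩ := h X hX
  rcases (frob_nonneg X).eq_or_lt with hzero | hpos
  · rw [← hzero, mul_zero]
  · exact nonneg_of_mul_nonneg_left (by nlinarith) hpos

lemma mip_sub_half_le (h : RIP A k δ) {X Y : Matrix (Fin n) (Fin n) ℝ}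
    (hadd : (X + Y).rank ≤ k) (hsub : (X - Y).rank ≤ k) :
    mip X Y - δ / 2 * (frob X ^ 2 + frob Y ^ 2) ≤ 1 / m * ∑ i, mip (A i) X * mip (A i) Y := by
  have hlower := (h _ hadd).1
  have hupper := (h _ hsub).2
  have hsamples : 1 / (m : ℝ) * ∑ i, mip (A i) (X + Y) ^ 2 - 1 / m * ∑ i, mip (A i) (X - Y) ^ 2
      = 4 * (1 / m * ∑ i, mip (A i) X * mip (A i) Y) := by
    rw [← mul_sub, sum_mip_sq_add_sub_sum_mip_sq_sub]
    ring
  have hpolar := frob_add_sq_sub_frob_sub_sq X Y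
  have hparallel := congrArg (δ * ·) (frob_add_sq_add_frob_sub_sq X Y)
  linarith

lemma mip_sub_le (h : RIP A k δ) {X Y : Matrix (Fin n) (Fin n) ℝ}
    (hXY : ∀ s t : ℝ, (s • X + t • Y).rank ≤ k) :
    mip X Y - δ * frob X * frob Y ≤ 1 / m * ∑ i, mip (A i) X * mip (A i) Y := by
  rcases (frob_nonneg X).eq_or_lt with hX | hX
  · rw [← hX]
    simp [frob_eq_zero_iff.1 hX.symm, mip]
  rcases (frob_nonneg Y).eq_or_lt with hY | hY
  · rw [← hY]
    simp [frob_eq_zero_iff.1 hY.symm, mip]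
  -- Rescaling `X` and `Y` to equal norms turns `δ/2 (‖X‖² + ‖Y‖²)` into `δ ‖X‖ ‖Y‖`.
  have key := h.mip_sub_half_le (X := frob Y • X) (Y := frob X • Y) (hXY _ _)
    (by simpa [sub_eq_add_neg] using hXY (frob Y) (-frob X))
  have hsum : ∑ i, mip (A i) (frob Y • X) * mip (A i) (frob X • Y)
      = frob X * frob Y * ∑ i, mip (A i) X * mip (A i) Y := by
    rw [Finset.mul_sum]
    refine Finset.sum_congr rfl fun i _ => ?_
    rw [mip_smul_right, mip_smul_right]
    ring
  rw [hsum, mip_smul_left, mip_smul_right, frob_smul_sq, frob_smul_sq] at key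
  refine le_of_mul_le_mul_left ?_ (mul_pos hX hY)
  linear_combination key

lemma sum_mul_mip_le (h : RIP A k δ) (hm : 0 < m) {σ L : ℝ} (hσ : 0 ≤ σ) (hL : 0 ≤ L)
    {w : Fin m → ℝ} {M : Matrix (Fin n) (Fin n) ℝ} (hM : M.rank ≤ k)
    (hw : |∑ i, w i * mip (A i) M| ≤ 2 * σ * √L * √(∑ i, mip (A i) M ^ 2)) :
    1 / m * ∑ i, w i * mip (A i) M ≤ 2 * √((1 + δ) * L / m) * σ * frob M := by
  have hm' : (0 : ℝ) < m := by exact_mod_cast hm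
  set S := ∑ i, mip (A i) M ^ 2
  set q := (1 + δ) * frob M ^ 2
  have hS : S ≤ m * q := by
    have := (h M hM).2
    rwa [one_div, inv_mul_le_iff₀ hm'] at this
  have hq : 0 ≤ q := nonneg_of_mul_nonneg_right
    ((Finset.sum_nonneg fun i _ => sq_nonneg _).trans hS) hm'
  have hroot : √L * √S ≤ m * √(q * L / m) := by
    rw [← Real.sqrt_mul hL, Real.sqrt_le_iff, mul_pow, Real.sq_sqrt (by positivity)]
    refine ⟨by positivity, ?_⟩
    calc L * S ≤ L * (m * q) := mul_le_mul_of_nonneg_left hS hL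
      _ = m ^ 2 * (q * L / m) := by field_simp
  have hq_eq : √(q * L / m) = √((1 + δ) * L / m) * frob M := by
    rw [← Real.sqrt_sq (frob_nonneg M), ← Real.sqrt_mul' _ (sq_nonneg _)]
    congr 1
    ring
  calc 1 / m * ∑ i, w i * mip (A i) M ≤ 1 / m * (2 * σ * (√L * √S)) := by
        rw [← mul_assoc (2 * σ)]
        exact mul_le_mul_of_nonneg_left ((le_abs_self _).trans hw) (by positivity)
    _ ≤ 1 / m * (2 * σ * (m * √(q * L / m))) := by gcongr
    _ = 2 * √((1 + δ) * L / m) * σ * frob M := by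
        rw [hq_eq]
        field_simp

end RIP

lemma sum_mul_mip_mul_transpose_eq_zero {n m r : ℕ} {A : Fin m → Matrix (Fin n) (Fin n) ℝ}
    {c : Fin m → ℝ} {U : Matrix (Fin n) (Fin r) ℝ} (h : ∑ i, c i • (A i * U) = 0)
    (V : Matrix (Fin n) (Fin r) ℝ) : ∑ i, c i * mip (A i) (V * Uᵀ) = 0 := by
  have htrace := congrArg (fun M => (Mᵀ * V).trace) h
  simp only [transpose_sum, transpose_smul, Matrix.sum_mul, Matrix.smul_mul, trace_sum,
    trace_smul, smul_eq_mul, transpose_zero, Matrix.zero_mul, trace_zero] at htrace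
  rw [← htrace]
  refine Finset.sum_congr rfl fun i _ => ?_
  rw [mip, ← Matrix.mul_assoc, trace_mul_comm, transpose_mul, Matrix.mul_assoc]

theorem noisy_first_order_condition_general {n m r : ℕ} (hm : 0 < m)
    (A : Fin m → Matrix (Fin n) (Fin n) ℝ)
    (δ : ℝ) (hRIP : RIP A (2 * r) δ)
    (Ustar : Matrix (Fin n) (Fin r) ℝ) (Xstar : Matrix (Fin n) (Fin n) ℝ)
    (hX : Xstar = Ustar * Ustarᵀ)
    (σw : ℝ) (hσw : 0 ≤ σw) (w : Fin m → ℝ)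
    (hw : ∀ M : Matrix (Fin n) (Fin n) ℝ, M.rank ≤ 2 * r →
      |∑ i, w i * mip (A i) M| ≤
        2 * σw * Real.sqrt (Real.log n) * Real.sqrt (∑ i, mip (A i) M ^ 2))
    (U : Matrix (Fin n) (Fin r) ℝ)
    (hstat : ∑ i, (mip (A i) (U * Uᵀ - Xstar) - w i) • (A i * U) = 0)
    (P : Matrix (Fin n) (Fin n) ℝ) (hPsym : Pᵀ = P) (hPidem : P * P = P)
    (hPrange : LinearMap.range P.mulVecLin = LinearMap.range U.mulVecLin) :
    frob ((U * Uᵀ - Xstar) * P) ≤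
      δ * frob (U * Uᵀ - Xstar) + 2 * Real.sqrt ((1 + δ) * Real.log n / m) * σw := by
  set E := U * Uᵀ - Xstar
  have hrank : ∀ s t : ℝ, (s • E + t • (E * P)).rank ≤ 2 * r := by
    intro s t
    have hfactor : s • E + t • (E * P) = E * (s • 1 + t • P) := by
      rw [Matrix.mul_add, Matrix.mul_smul, Matrix.mul_smul, Matrix.mul_one]
    rw [hfactor]
    refine (rank_mul_le_left _ _).trans ((rank_sub_le _ _).trans ?_)
    rw [hX, rank_self_mul_transpose, rank_self_mul_transpose]
    linarith [rank_le_width U, rank_le_width Ustar]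
  have hrankEP : (E * P).rank ≤ 2 * r := by simpa using hrank 0 1
  obtain ⟨C, hC⟩ := exists_mul_eq_of_range_mulVecLin_le hPrange.le
  have hEP : E * P = (E * Cᵀ) * Uᵀ := by rw [Matrix.mul_assoc, ← transpose_mul, hC, hPsym]
  have hstatEP : ∑ i, (mip (A i) E - w i) * mip (A i) (E * P) = 0 := by
    rw [hEP]
    exact sum_mul_mip_mul_transpose_eq_zero hstat _
  have hsignal := hRIP.mip_sub_le hrank
  rw [mip_mul_orthogonalProjection hPsym hPidem] at hsignal
  have hnoise := hRIP.sum_mul_mip_le hm hσw (Real.log_natCast_nonneg n) hrankEP (hw _ hrankEP)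
  have hsum : ∑ i, mip (A i) E * mip (A i) (E * P) = ∑ i, w i * mip (A i) (E * P) := by
    rw [← sub_eq_zero, ← Finset.sum_sub_distrib, ← hstatEP]
    exact Finset.sum_congr rfl fun i _ => by ring
  have hδE := hRIP.mul_frob_nonneg (by simpa using hrank 1 0)
  have hc : 0 ≤ 2 * Real.sqrt ((1 + δ) * Real.log n / m) * σw := by positivity
  rw [hsum] at hsignal
  have hquad : frob (E * P) ^ 2 ≤
      (δ * frob E + 2 * Real.sqrt ((1 + δ) * Real.log n / m) * σw) * frob (E * P) := by
    linarith
  nlinarith [frob_nonneg (E * P)]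

/-- Noisy first-order condition: the projected error at a noisy stationary point. -/
theorem noisy_first_order_condition {n m r : ℕ} (hn : 2 ≤ n) (hm : 0 < m) (hr : 0 < r)
    (A : Fin m → Matrix (Fin n) (Fin n) ℝ)
    (δ : ℝ) (hRIP : RIP A (2 * r) δ)
    (Ustar : Matrix (Fin n) (Fin r) ℝ) (Xstar : Matrix (Fin n) (Fin n) ℝ)
    (hX : Xstar = Ustar * Ustarᵀ)
    (σw : ℝ) (hσw : 0 ≤ σw) (w : Fin m → ℝ)
    (hw : ∀ M : Matrix (Fin n) (Fin n) ℝ, M.rank ≤ 2 * r →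
      |∑ i, w i * mip (A i) M| ≤
        2 * σw * Real.sqrt (Real.log n) * Real.sqrt (∑ i, mip (A i) M ^ 2))
    (U : Matrix (Fin n) (Fin r) ℝ)
    (hstat : ∑ i, (mip (A i) (U * Uᵀ - Xstar) - w i) • (A i * U) = 0)
    (P : Matrix (Fin n) (Fin n) ℝ) (hPsym : Pᵀ = P) (hPidem : P * P = P)
    (hPrange : LinearMap.range P.mulVecLin = LinearMap.range U.mulVecLin) :
    frob ((U * Uᵀ - Xstar) * P) ≤
      δ * frob (U * Uᵀ - Xstar) + 2 * Real.sqrt ((1 + δ) * Real.log n / m) * σw :=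
  noisy_first_order_condition_general hm A δ hRIP Ustar Xstar hX σw hσw w hw U hstat P hPsym hPidem
    hPrange
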